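/- arXiv:1810.02270 — 2 statements merged into one kernel-verified Lean document; each statement's English description precedes it below -/
import Mathlib

section
/- Let t be a binary search tree and let x and y be keys occupying adjacent positions in the in-order traversal of t. If the depth of x in t is strictly less than the depth of y in t, then x is an ancestor of y in t. -/
/-- Binary trees over a type `α`. -/
inductive BTree (α : Type*) where
  | nil : BTree α
  | node (l : BTree α) (a : α) (r : BTree α) : BTree α
  deriving DecidableEq

namespace BTree

variable {α : Type*}

/-- In-order traversal. -/
def inorder : BTree α → List α
  | nil => []
  | node l a r => inorder l ++ [a] ++ inorder r

/-- Key membership in a tree. -/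
def Mem : BTree α → α → Prop
  | nil, _ => False
  | node l a r, x => Mem l x ∨ x = a ∨ Mem r x

/-- `IsSubtree s t` means `s` occurs as a subtree of `t`. -/
inductive IsSubtree : BTree α → BTree α → Prop
  | refl (t : BTree α) : IsSubtree t t
  | left {s l r : BTree α} {a : α} : IsSubtree s l → IsSubtree s (node l a r)
  | right {s l r : BTree α} {a : α} : IsSubtree s r → IsSubtree s (node l a r)

/-- `x` and `y` occupy adjacent positions in the list `L` (`x` immediately before `y`). -/
def Adjacent (L : List α) (x y : α) : Prop :=
  ∃ i : ℕ, L[i]? = some x ∧ L[i + 1]? = some y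

variable [LinearOrder α]

/-- The binary-search-tree property: at every node, all keys of the left subtree are
smaller than the root key and all keys of the right subtree are larger. -/
def IsBST : BTree α → Prop
  | nil => True
  | node l a r => (∀ x, Mem l x → x < a) ∧ (∀ x, Mem r x → a < x) ∧ IsBST l ∧ IsBST r

/-- `Ancestor t x y`: the key `x` is an ancestor of the key `y` in `t`, i.e. `y` occurs
in a proper subtree of the subtree of `t` rooted at `x`. -/
def Ancestor (t : BTree α) (x y : α) : Prop :=
  ∃ l r : BTree α, IsSubtree (node l x r) t ∧ (Mem l y ∨ Mem r y)

/-- Depth (number of edges from the root) of a key in a binary search tree,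
computed by the standard search path. -/
def depth : BTree α → α → ℕ
  | nil, _ => 0
  | node l a r, x => if x = a then 0 else if x < a then depth l x + 1 else depth r x + 1

end BTree

/-!
Induct on the tree. Two keys adjacent in the in-order traversal of `node l a r` are either
adjacent inside `l` or inside `r`, where the search-tree property shifts both depths by one
and the induction hypothesis applies, or one of them is the root `a`. If `a` is the later key,
its depth `0` cannot exceed the other's; if `a` is the earlier key, the later one is the first
key of `r`, hence below `a`.
-/

namespace BTree

variable {α : Type*}

theorem mem_iff_mem_inorder {t : BTree α} {z : α} : Mem t z ↔ z ∈ inorder t := by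
  induction t with
  | nil => simp [Mem, inorder]
  | node l a r ihl ihr =>
    simp only [Mem, inorder, ihl, ihr, List.mem_append, List.mem_singleton]
    tauto

section Adjacent

variable {L M : List α} {a x y : α}

theorem Adjacent.mem_left (h : Adjacent L x y) : x ∈ L :=
  List.mem_of_getElem? h.choose_spec.1

theorem Adjacent.mem_right (h : Adjacent L x y) : y ∈ L :=
  List.mem_of_getElem? h.choose_spec.2

theorem Adjacent.of_append (h : Adjacent (L ++ M) x y) :
    Adjacent L x y ∨ (L.getLast? = some x ∧ M.head? = some y) ∨ Adjacent M x y := by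
  obtain ⟨i, hx, hy⟩ := h
  rcases lt_or_ge (i + 1) L.length with hi | hi
  · rw [List.getElem?_append_left (by omega)] at hx
    rw [List.getElem?_append_left hi] at hy
    exact Or.inl ⟨i, hx, hy⟩
  rcases eq_or_lt_of_le hi with hi | hi
  · rw [List.getElem?_append_left (by omega), show i = L.length - 1 by omega,
      ← List.getLast?_eq_getElem?] at hx
    rw [List.getElem?_append_right hi.le, ← hi, Nat.sub_self, ← List.head?_eq_getElem?] at hy
    exact Or.inr (Or.inl ⟨hx, hy⟩)
  · rw [List.getElem?_append_right (by omega)] at hx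
    rw [List.getElem?_append_right (by omega), show i + 1 - L.length = i - L.length + 1 by omega]
      at hy
    exact Or.inr (Or.inr ⟨_, hx, hy⟩)

theorem Adjacent.of_cons (h : Adjacent (a :: M) x y) : (x = a ∧ y ∈ M) ∨ Adjacent M x y := by
  obtain ⟨_ | i, hx, hy⟩ := h
  · simp only [List.getElem?_cons_zero, Option.some.injEq, List.getElem?_cons_succ] at hx hy
    exact Or.inl ⟨hx.symm, List.mem_of_getElem? hy⟩
  · exact Or.inr ⟨i, hx, hy⟩

theorem Adjacent.of_inorder_node {l r : BTree α} (h : Adjacent (inorder (node l a r)) x y) :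
    Adjacent (inorder l) x y ∨ y = a ∨ (x = a ∧ Mem r y) ∨ Adjacent (inorder r) x y := by
  rw [inorder, List.append_assoc, List.singleton_append] at h
  rcases h.of_append with h | ⟨-, hy⟩ | h
  · exact Or.inl h
  · exact Or.inr (Or.inl (Option.some_injective _ hy).symm)
  · rw [mem_iff_mem_inorder]
    exact Or.inr (Or.inr h.of_cons)

end Adjacent

section Ancestor

variable {l r : BTree α} {a x y : α}

theorem Ancestor.node_left (h : Ancestor l x y) : Ancestor (node l a r) x y :=
  let ⟨l', r', hsub, hy⟩ := h
  ⟨l', r', hsub.left, hy⟩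

theorem Ancestor.node_right (h : Ancestor r x y) : Ancestor (node l a r) x y :=
  let ⟨l', r', hsub, hy⟩ := h
  ⟨l', r', hsub.right, hy⟩

theorem ancestor_node_root_of_mem_right (h : Mem r y) : Ancestor (node l a r) a y :=
  ⟨l, r, .refl _, .inr h⟩

end Ancestor

variable [LinearOrder α]

section Depth

variable {l r : BTree α} {a x : α}

theorem depth_node_self : depth (node l a r) a = 0 := by
  simp [depth]

theorem depth_node_of_lt (h : x < a) : depth (node l a r) x = depth l x + 1 := by
  simp [depth, h.ne, h]

theorem depth_node_of_gt (h : a < x) : depth (node l a r) x = depth r x + 1 := by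
  simp [depth, h.ne', h.not_gt]

end Depth

/-- of two keys adjacent in the in-order traversal of a BST, the shallower
one is an ancestor of the deeper one. -/
theorem ancestor_of_adjacent_of_depth_lt (t : BTree α) (ht : IsBST t) (x y : α)
    (hadj : Adjacent (inorder t) x y) (hd : depth t x < depth t y) :
    Ancestor t x y := by
  induction t with
  | nil => exact absurd hadj.mem_left List.not_mem_nil
  | node l a r ihl ihr =>
    obtain ⟨hl_lt, hr_gt, hl, hr⟩ := ht
    rcases hadj.of_inorder_node with hadj | rfl | ⟨rfl, hy⟩ | hadj
    · have hx := hl_lt x (mem_iff_mem_inorder.mpr hadj.mem_left)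
      have hy := hl_lt y (mem_iff_mem_inorder.mpr hadj.mem_right)
      rw [depth_node_of_lt hx, depth_node_of_lt hy] at hd
      exact (ihl hl hadj (by omega)).node_left
    · rw [depth_node_self] at hd
      exact absurd hd (Nat.not_lt_zero _)
    · exact ancestor_node_root_of_mem_right hy
    · have hx := hr_gt x (mem_iff_mem_inorder.mpr hadj.mem_left)
      have hy := hr_gt y (mem_iff_mem_inorder.mpr hadj.mem_right)
      rw [depth_node_of_gt hx, depth_node_of_gt hy] at hd
      exact (ihr hr hadj (by omega)).node_right

end BTree
end

section
/- Let t be a binary search tree and let x and y be keys occupying adjacent positions in the in-order traversal of t. Then it is not the case that both the subtree of t rooted at x and the subtree of t rooted at y are terminals, i.e., at least one of the two subtrees has a nonempty child. -/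
namespace BTree

variable {α : Type*}

theorem Adjacent.of_append_s6 {L₁ L₂ : List α} {x y : α} (h : Adjacent (L₁ ++ L₂) x y) :
    Adjacent L₁ x y ∨ (L₁.getLast? = some x ∧ L₂.head? = some y) ∨ Adjacent L₂ x y := by
  obtain ⟨i, hx, hy⟩ := h
  rw [List.getElem?_append] at hx hy
  rcases lt_trichotomy (i + 1) L₁.length with hi | hi | hi
  · rw [if_pos (by omega)] at hx hy
    exact .inl ⟨i, hx, hy⟩
  · rw [if_pos (by omega)] at hx
    rw [if_neg (by omega), show i + 1 - L₁.length = 0 by omega] at hy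
    refine .inr (.inl ⟨?_, List.head?_eq_getElem? ▸ hy⟩)
    rwa [List.getLast?_eq_getElem?, ← hi, Nat.add_sub_cancel]
  · rw [if_neg (by omega)] at hx hy
    refine .inr (.inr ⟨i - L₁.length, hx, ?_⟩)
    rwa [show i - L₁.length + 1 = i + 1 - L₁.length by omega]

theorem not_adjacent_singleton (a x y : α) : ¬ Adjacent [a] x y := by
  rintro ⟨i, -, hy⟩
  simp at hy

theorem ne_nil_of_mem {t : BTree α} {z : α} (h : Mem t z) : t ≠ nil := by
  rintro rfl
  exact h

theorem IsSubtree.mem {s t : BTree α} (h : IsSubtree s t) {z : α} (hz : Mem s z) : Mem t z := by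
  induction h with
  | refl => exact hz
  | left _ ih => exact .inl ih
  | right _ ih => exact .inr (.inr ih)

theorem ancestor_or_ancestor_of_adjacent {t : BTree α} {x y : α}
    (h : Adjacent (inorder t) x y) : Ancestor t x y ∨ Ancestor t y x := by
  induction t with
  | nil => obtain ⟨i, hx, -⟩ := h; simp [inorder] at hx
  | node l a r ihl ihr =>
    rcases h.of_append_s6 with h | ⟨hx, hy⟩ | h
    · rcases h.of_append_s6 with h | ⟨hx, hy⟩ | h
      · rcases ihl h with ⟨l', r', hs, hm⟩ | ⟨l', r', hs, hm⟩
        · exact .inl ⟨l', r', hs.left, hm⟩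
        · exact .inr ⟨l', r', hs.left, hm⟩
      · obtain rfl : y = a := by simpa using hy.symm
        exact .inr ⟨l, r, .refl _, .inl (mem_iff_mem_inorder.2 (List.mem_of_getLast? hx))⟩
      · exact absurd h (not_adjacent_singleton a x y)
    · obtain rfl : x = a := by simpa using hx.symm
      exact .inl ⟨l, r, .refl _, .inr (mem_iff_mem_inorder.2 (List.mem_of_mem_head? hy))⟩
    · rcases ihr h with ⟨l', r', hs, hm⟩ | ⟨l', r', hs, hm⟩
      · exact .inl ⟨l', r', hs.right, hm⟩
      · exact .inr ⟨l', r', hs.right, hm⟩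

variable [LinearOrder α]

theorem IsBST.subtree_left_of_mem {l r s s' : BTree α} {a b : α} (ht : IsBST (node l a r))
    (h : IsSubtree (node s b s') (node l a r)) (hb : Mem l b) : IsSubtree (node s b s') l := by
  have hba := ht.1 b hb
  cases h with
  | refl => exact absurd hba (lt_irrefl a)
  | left h => exact h
  | right h => exact absurd (ht.2.1 b (h.mem (.inr (.inl rfl)))) hba.asymm

theorem IsBST.subtree_right_of_mem {l r s s' : BTree α} {a b : α} (ht : IsBST (node l a r))
    (h : IsSubtree (node s b s') (node l a r)) (hb : Mem r b) : IsSubtree (node s b s') r := by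
  have hab := ht.2.1 b hb
  cases h with
  | refl => exact absurd hab (lt_irrefl a)
  | left h => exact absurd (ht.1 b (h.mem (.inr (.inl rfl)))) hab.asymm
  | right h => exact h

theorem IsBST.subtree_root_eq {l r s s' : BTree α} {a : α} (ht : IsBST (node l a r))
    (h : IsSubtree (node s a s') (node l a r)) : s = l ∧ s' = r := by
  cases h with
  | refl => exact ⟨rfl, rfl⟩
  | left h => exact absurd (ht.1 a (h.mem (.inr (.inl rfl)))) (lt_irrefl a)
  | right h => exact absurd (ht.2.1 a (h.mem (.inr (.inl rfl)))) (lt_irrefl a)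

theorem IsBST.subtree_unique {t l r l' r' : BTree α} {a : α} (ht : IsBST t)
    (h : IsSubtree (node l a r) t) (h' : IsSubtree (node l' a r') t) : l = l' ∧ r = r' := by
  induction t with
  | nil => cases h
  | node L c R ihL ihR =>
    rcases h.mem (.inr (.inl rfl)) with ha | rfl | ha
    · exact ihL ht.2.2.1 (ht.subtree_left_of_mem h ha) (ht.subtree_left_of_mem h' ha)
    · obtain ⟨rfl, rfl⟩ := ht.subtree_root_eq h
      obtain ⟨rfl, rfl⟩ := ht.subtree_root_eq h'
      exact ⟨rfl, rfl⟩
    · exact ihR ht.2.2.2 (ht.subtree_right_of_mem h ha) (ht.subtree_right_of_mem h' ha)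

theorem IsBST.ne_nil_of_ancestor {t l r : BTree α} {x y : α} (ht : IsBST t)
    (hxy : Ancestor t x y) (hx : IsSubtree (node l x r) t) : l ≠ nil ∨ r ≠ nil := by
  obtain ⟨l', r', hs, hm⟩ := hxy
  obtain ⟨rfl, rfl⟩ := ht.subtree_unique hs hx
  exact hm.imp ne_nil_of_mem ne_nil_of_mem

/-- two keys adjacent in the in-order traversal of a BST cannot both be
terminals; at least one of their rooted subtrees has a nonempty child. -/
theorem not_both_terminals (t : BTree α) (ht : IsBST t) (x y : α)
    (hadj : Adjacent (inorder t) x y) (lx rx ly ry : BTree α)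
    (hx : IsSubtree (node lx x rx) t) (hy : IsSubtree (node ly y ry) t) :
    lx ≠ nil ∨ rx ≠ nil ∨ ly ≠ nil ∨ ry ≠ nil := by
  rcases ancestor_or_ancestor_of_adjacent hadj with hxy | hyx
  · exact (ht.ne_nil_of_ancestor hxy hx).elim .inl (.inr ∘ .inl)
  · exact .inr (.inr (ht.ne_nil_of_ancestor hyx hy))

end BTree
end
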